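/- For every integer n ≥ 0, as real s → ∞, 1 - Q_n(s)/ζ(s) is asymptotically equivalent to p_{n+1}^{-s}; i.e., the limit of p_{n+1}^s (1 - Q_n(s)/ζ(s)) equals 1. -/

import Mathlib

/-!
With `p = p_{n+1}`, the Euler product identifies `Q_n(s)` with the part of `∑ m ^ (-s)` over the
`p`-smooth `m`, so `p ^ s (ζ(s) - Q_n(s)) = ∑ (p / m) ^ s` over the `m` that are not `p`-smooth.
Apart from `m = 0`, these are `m = p` and `m > p`; the terms tend to `1` and `0` respectively, and
for `s ≥ 2` they are dominated by the summable `(p / m) ^ 2`, so by Tannery's theorem the sum tends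
to `1`. The same argument with `p = 1` gives `ζ(s) → 1`.
-/

open Filter Real

noncomputable def zetaR (s : ℝ) : ℝ := ∑' m : ℕ, (m : ℝ) ^ (-s)

/-- `P k` is the (k+1)-st prime: `P 0 = 2`, `P 1 = 3`, ... -/
noncomputable def P (k : ℕ) : ℕ := Nat.nth Nat.Prime k

/-- Partial Euler product `Q n s = ∏_{k=1}^n (1 - p_k^{-s})⁻¹`. -/
noncomputable def Q (n : ℕ) (s : ℝ) : ℝ := ∏ k ∈ Finset.range n, (1 - (P k : ℝ) ^ (-s))⁻¹

open Topology

lemma tendsto_natCast_div_rpow_atTop {N m : ℕ} (hN : 0 < N) (hm : m = 0 ∨ N ≤ m) :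
    Tendsto (fun s : ℝ => ((N : ℝ) / m) ^ s) atTop (𝓝 (if m = N then 1 else 0)) := by
  obtain rfl | hNm := hm
  -- `N / 0 = 0` in `ℝ`, so this term is `0 ^ s`, which vanishes for `s > 0`.
  · rw [if_neg hN.ne]
    refine tendsto_const_nhds.congr' ?_
    filter_upwards [eventually_gt_atTop 0] with s hs
    simp [zero_rpow hs.ne']
  obtain rfl | hlt := hNm.eq_or_lt
  · have : (N : ℝ) ≠ 0 := by exact_mod_cast hN.ne'
    simp [this]
  · rw [if_neg hlt.ne']
    have hm : (0 : ℝ) < m := by exact_mod_cast hN.trans hlt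
    refine tendsto_rpow_atTop_of_base_lt_one _ (neg_one_lt_zero.trans_le (by positivity)) ?_
    rw [div_lt_one hm]
    exact_mod_cast hlt

lemma tendsto_tsum_indicator_natCast_div_rpow_atTop {N : ℕ} {S : Set ℕ} (hN : 0 < N)
    (hNS : N ∈ S) (hS : ∀ m ∈ S, m = 0 ∨ N ≤ m) :
    Tendsto (fun s : ℝ => ∑' m, S.indicator (fun m : ℕ => ((N : ℝ) / m) ^ s) m) atTop (𝓝 1) := by
  have hlim : ∑' m : ℕ, S.indicator (fun m => if m = N then (1 : ℝ) else 0) m = 1 := by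
    rw [tsum_eq_single N fun m hm => by simp [hm]]
    simp [hNS]
  rw [← hlim]
  refine tendsto_tsum_of_dominated_convergence (bound := fun m : ℕ => ((N : ℝ) / m) ^ 2)
    ?_ (fun m => ?_) ?_
  · simp_rw [div_pow, div_eq_mul_inv]
    exact (summable_nat_pow_inv.mpr one_lt_two).mul_left _
  · by_cases hm : m ∈ S
    · simp only [Set.indicator_of_mem hm]
      exact tendsto_natCast_div_rpow_atTop hN (hS m hm)
    · simp [Set.indicator_of_notMem hm]
  · filter_upwards [eventually_ge_atTop 2] with s hs m
    by_cases hm : m ∈ S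
    · rw [Set.indicator_of_mem hm, norm_of_nonneg (by positivity), ← rpow_two]
      refine rpow_le_rpow_of_exponent_ge' (by positivity) ?_ zero_le_two hs
      obtain rfl | hNm := hS m hm
      · simp
      · rw [div_le_one (by exact_mod_cast hN.trans_le hNm)]
        exact_mod_cast hNm
    · rw [Set.indicator_of_notMem hm, norm_zero]
      positivity

lemma zetaR_eq_tsum_one_div_rpow (s : ℝ) : zetaR s = ∑' m : ℕ, ((1 : ℝ) / m) ^ s := by
  simp_rw [zetaR, one_div, inv_rpow (Nat.cast_nonneg _), rpow_neg (Nat.cast_nonneg _)]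

lemma tendsto_zetaR_atTop : Tendsto zetaR atTop (𝓝 1) := by
  have := tendsto_tsum_indicator_natCast_div_rpow_atTop (S := Set.univ) one_pos
    (Set.mem_univ 1) (fun m _ => m.eq_zero_or_pos)
  simpa only [Set.indicator_univ, ← zetaR_eq_tsum_one_div_rpow, Nat.cast_one] using this

lemma prime_P (k : ℕ) : (P k).Prime := Nat.nth_mem_of_infinite Nat.infinite_setOfPred_prime k

lemma P_injective : Function.Injective P := Nat.nth_injective Nat.infinite_setOfPred_prime

lemma primesBelow_P (n : ℕ) : Nat.primesBelow (P n) = (Finset.range n).image P := by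
  ext q
  simp only [Nat.mem_primesBelow, Finset.mem_image, Finset.mem_range, P]
  constructor
  · rintro ⟨hlt, hq⟩
    refine ⟨Nat.count Nat.Prime q, ?_, Nat.nth_count hq⟩
    rwa [← Nat.nth_lt_nth Nat.infinite_setOfPred_prime, Nat.nth_count hq]
  · rintro ⟨k, hk, rfl⟩
    exact ⟨(Nat.nth_lt_nth Nat.infinite_setOfPred_prime).mpr hk, prime_P k⟩

noncomputable def natCastRpowNeg (s : ℝ) : ℕ →* ℝ where
  toFun m := (m : ℝ) ^ (-s)
  map_one' := by simp
  map_mul' a b := by simp only [Nat.cast_mul, mul_rpow (Nat.cast_nonneg a) (Nat.cast_nonneg b)]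

lemma Q_eq_tsum_smoothNumbers {s : ℝ} (hs : 1 < s) (n : ℕ) :
    Q n s = ∑' m : Nat.smoothNumbers (P n), (m : ℝ) ^ (-s) := by
  have := EulerProduct.prod_primesBelow_geometric_eq_tsum_smoothNumbers
    (f := natCastRpowNeg s) (summable_nat_rpow.mpr (neg_lt_neg hs)) (P n)
  rwa [primesBelow_P, Finset.prod_image P_injective.injOn] at this

lemma eq_zero_or_le_of_notMem_smoothNumbers {m N : ℕ} (hm : m ∉ Nat.smoothNumbers N) :
    m = 0 ∨ N ≤ m := by
  contrapose! hm
  exact Nat.mem_smoothNumbers_of_lt (Nat.pos_of_ne_zero hm.1) hm.2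

lemma prime_notMem_smoothNumbers {p : ℕ} (hp : p.Prime) : p ∉ Nat.smoothNumbers p :=
  fun h => (Nat.mem_smoothNumbers'.mp h p hp dvd_rfl).false

lemma rpow_mul_zetaR_sub_Q {s : ℝ} (hs : 1 < s) (n : ℕ) :
    (P n : ℝ) ^ s * (zetaR s - Q n s) =
      ∑' m, (Nat.smoothNumbers (P n))ᶜ.indicator (fun m : ℕ => ((P n : ℝ) / m) ^ s) m := by
  have hsum : Summable fun m : ℕ => (m : ℝ) ^ (-s) := summable_nat_rpow.mpr (neg_lt_neg hs)
  have hterm : (fun m : ℕ => (P n : ℝ) ^ s * (m : ℝ) ^ (-s)) =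
      fun m : ℕ => ((P n : ℝ) / m) ^ s := by
    ext m
    rw [div_rpow (Nat.cast_nonneg _) (Nat.cast_nonneg _), rpow_neg (Nat.cast_nonneg _),
      div_eq_mul_inv]
  rw [zetaR, Q_eq_tsum_smoothNumbers hs,
    ← hsum.tsum_subtype_add_tsum_subtype_compl (Nat.smoothNumbers (P n)), add_sub_cancel_left,
    ← tsum_mul_left, tsum_subtype _ fun m : ℕ => (P n : ℝ) ^ s * (m : ℝ) ^ (-s), hterm]

theorem ratio_asymptotic (n : ℕ) :
    Tendsto (fun s : ℝ => (P n : ℝ) ^ s * (1 - Q n s / zetaR s)) atTop (nhds 1) := by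
  have hnum := tendsto_tsum_indicator_natCast_div_rpow_atTop
    (S := (Nat.smoothNumbers (P n))ᶜ) (prime_P n).pos
    (prime_notMem_smoothNumbers (prime_P n)) fun m => eq_zero_or_le_of_notMem_smoothNumbers
  have hlim := hnum.div tendsto_zetaR_atTop one_ne_zero
  rw [div_one] at hlim
  refine hlim.congr' ?_
  filter_upwards [eventually_gt_atTop 1, tendsto_zetaR_atTop.eventually_ne one_ne_zero]
    with s hs hζ
  rw [Pi.div_apply, ← rpow_mul_zetaR_sub_Q hs, one_sub_div hζ, mul_div_assoc]
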